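/- For all n ≥ 0 and 0 ≤ k ≤ n, C(n,k)^2 * C(n+k,k)^2 = sum over j of C(2k,k)*C(k,j-k)*C(j,k)*C(n,j)*C(n+j,j) (the special case i = k of the key identity). -/

import Mathlib

open Finset

private lemma vander (a b c : ℕ) :
    (a + b).choose c = ∑ s ∈ range (c+1), a.choose s * b.choose (c - s) := by
  rw [Nat.add_choose_eq]
  exact Finset.Nat.sum_antidiagonal_eq_sum_range_succ (fun x y => a.choose x * b.choose y) c

private lemma tri {a b c : ℕ} (hcb : c ≤ b) :
    a.choose b * b.choose c = a.choose c * (a - c).choose (b - c) := by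
  rcases le_or_gt b a with hba | hba
  · have hca : c ≤ a := hcb.trans hba
    have h1 : b - c ≤ a - c := by omega
    have q : ((a.choose b : ℚ)) * b.choose c = (a.choose c) * ((a-c).choose (b-c)) := by
      rw [Nat.cast_choose ℚ hba, Nat.cast_choose ℚ hcb, Nat.cast_choose ℚ hca,
        Nat.cast_choose ℚ h1]
      have e1 : a - c - (b - c) = a - b := by omega
      rw [e1]
      have f1 : ((a-b).factorial : ℚ) ≠ 0 := Nat.cast_ne_zero.2 (Nat.factorial_ne_zero _)
      have f2 : ((b-c).factorial : ℚ) ≠ 0 := Nat.cast_ne_zero.2 (Nat.factorial_ne_zero _)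
      have f3 : ((a-c).factorial : ℚ) ≠ 0 := Nat.cast_ne_zero.2 (Nat.factorial_ne_zero _)
      have f4 : (b.factorial : ℚ) ≠ 0 := Nat.cast_ne_zero.2 (Nat.factorial_ne_zero _)
      have f5 : (c.factorial : ℚ) ≠ 0 := Nat.cast_ne_zero.2 (Nat.factorial_ne_zero _)
      field_simp
    exact_mod_cast q
  · rw [Nat.choose_eq_zero_of_lt hba, zero_mul]
    rcases le_or_gt c a with hca | hca
    · rw [Nat.choose_eq_zero_of_lt (show a - c < b - c by omega), mul_zero]
    · rw [Nat.choose_eq_zero_of_lt hca, zero_mul]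

private lemma V2 (a b s : ℕ) :
    ∑ t ∈ range (a+1), a.choose t * b.choose (s+t) = (a+b).choose (a+s) := by
  have key : ∑ u ∈ Ico s (a+s+1), b.choose u * a.choose (a+s-u)
      = ∑ t ∈ range (a+1), a.choose t * b.choose (s+t) := by
    rw [Finset.sum_Ico_eq_sum_range, show a+s+1-s = a+1 by omega]
    refine sum_congr rfl fun t ht => ?_
    simp only [mem_range] at ht
    rw [show a + s - (s + t) = a - t by omega, Nat.choose_symm (by omega), mul_comm]
  calc ∑ t ∈ range (a+1), a.choose t * b.choose (s+t)
      = ∑ u ∈ Ico s (a+s+1), b.choose u * a.choose (a+s-u) := key.symm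
    _ = ∑ u ∈ Ico 0 (a+s+1), b.choose u * a.choose (a+s-u) := by
        refine Finset.sum_subset (fun x hx => ?_) (fun u hu hu2 => ?_)
        · simp only [mem_Ico] at hx ⊢; omega
        · simp only [mem_Ico] at hu hu2
          rw [Nat.choose_eq_zero_of_lt (show a < a + s - u by omega), mul_zero]
    _ = (a+b).choose (a+s) := by
        rw [Nat.add_comm a b, vander b a (a+s), range_eq_Ico]

private lemma innerSumAux {n k s : ℕ} (hs : s ≤ k) (hk : k ≤ n) :
    ∑ m ∈ range (k+1), k.choose m * ((n-k).choose m * m.choose s)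
      = k.choose s * (n-s).choose k := by
  have key : ∑ m ∈ Ico s (k+1), k.choose m * ((n-k).choose m * m.choose s)
      = k.choose s * ∑ t ∈ range ((k-s)+1), (k-s).choose t * (n-k).choose (s+t) := by
    rw [Finset.sum_Ico_eq_sum_range, show k+1-s = (k-s)+1 by omega, Finset.mul_sum]
    refine sum_congr rfl fun t ht => ?_
    have h2 : k.choose (s+t) * (s+t).choose s = k.choose s * (k-s).choose t := by
      have := tri (a := k) (b := s+t) (c := s) (Nat.le_add_right s t)
      rwa [Nat.add_sub_cancel_left] at this
    calc k.choose (s+t) * ((n-k).choose (s+t) * (s+t).choose s)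
        = k.choose (s+t) * (s+t).choose s * (n-k).choose (s+t) := by ring
      _ = k.choose s * (k-s).choose t * (n-k).choose (s+t) := by rw [h2]
      _ = k.choose s * ((k-s).choose t * (n-k).choose (s+t)) := by ring
  calc ∑ m ∈ range (k+1), k.choose m * ((n-k).choose m * m.choose s)
      = ∑ m ∈ Ico s (k+1), k.choose m * ((n-k).choose m * m.choose s) := by
        rw [range_eq_Ico]
        refine (Finset.sum_subset (fun x hx => ?_) (fun m hm hm2 => ?_)).symm
        · simp only [mem_Ico] at hx ⊢; omega
        · simp only [mem_Ico] at hm hm2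
          rw [Nat.choose_eq_zero_of_lt (show m < s by omega), mul_zero, mul_zero]
    _ = k.choose s * ∑ t ∈ range ((k-s)+1), (k-s).choose t * (n-k).choose (s+t) := key
    _ = k.choose s * (n-s).choose k := by
        rw [V2 (k-s) (n-k) s, show k-s+(n-k) = n-s by omega, show k-s+s = k by omega]

private lemma Tlem {n k s : ℕ} (hs : s ≤ k) (hk : k ≤ n) :
    (2*k).choose k * (k.choose s * ((n-s).choose k * (n+k).choose (n-s)))
      = n.choose k * ((n+k).choose k * ((2*k).choose (k-s) * (n-k).choose s)) := by
  rcases le_or_gt s (n-k) with hsn | hsn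
  · have q : ((2*k).choose k : ℚ) * (k.choose s * ((n-s).choose k * (n+k).choose (n-s)))
        = n.choose k * ((n+k).choose k * ((2*k).choose (k-s) * (n-k).choose s)) := by
      rw [Nat.cast_choose ℚ (show k ≤ 2*k by omega),
        Nat.cast_choose ℚ hs,
        Nat.cast_choose ℚ (show k ≤ n-s by omega),
        Nat.cast_choose ℚ (show n-s ≤ n+k by omega),
        Nat.cast_choose ℚ hk,
        Nat.cast_choose ℚ (show k ≤ n+k by omega),
        Nat.cast_choose ℚ (show k-s ≤ 2*k by omega),
        Nat.cast_choose ℚ hsn,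
        show 2*k - k = k by omega, show (n-s) - k = n-k-s by omega,
        show (n+k) - (n-s) = k+s by omega, show (n+k) - k = n by omega,
        show 2*k - (k-s) = k+s by omega, show (n-k) - s = n-k-s by omega]
      have f1 : (Nat.factorial k : ℚ) ≠ 0 := Nat.cast_ne_zero.2 (Nat.factorial_ne_zero _)
      have f2 : (Nat.factorial s : ℚ) ≠ 0 := Nat.cast_ne_zero.2 (Nat.factorial_ne_zero _)
      have f3 : (Nat.factorial (k-s) : ℚ) ≠ 0 := Nat.cast_ne_zero.2 (Nat.factorial_ne_zero _)
      have f4 : (Nat.factorial (n-s) : ℚ) ≠ 0 := Nat.cast_ne_zero.2 (Nat.factorial_ne_zero _)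
      have f5 : (Nat.factorial (n-k-s) : ℚ) ≠ 0 := Nat.cast_ne_zero.2 (Nat.factorial_ne_zero _)
      have f6 : (Nat.factorial (k+s) : ℚ) ≠ 0 := Nat.cast_ne_zero.2 (Nat.factorial_ne_zero _)
      have f7 : (Nat.factorial n : ℚ) ≠ 0 := Nat.cast_ne_zero.2 (Nat.factorial_ne_zero _)
      have f8 : (Nat.factorial (n-k) : ℚ) ≠ 0 := Nat.cast_ne_zero.2 (Nat.factorial_ne_zero _)
      field_simp
    exact_mod_cast q
  · rw [Nat.choose_eq_zero_of_lt (show n-s < k by omega),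
      Nat.choose_eq_zero_of_lt (show n-k < s by omega)]
    ring

private lemma expandAux {n k m : ℕ} (hm : m ≤ k) (hk : k ≤ n) :
    (n+(k+m)).choose (k+m) = ∑ s ∈ range (k+1), m.choose s * (n+k).choose (n-s) := by
  have h1 : (n+(k+m)).choose (k+m) = (m+(n+k)).choose n := by
    rw [show m+(n+k) = n+(k+m) by ring]
    exact Nat.choose_symm_of_eq_add (by ring)
  rw [h1, vander m (n+k) n]
  refine (Finset.sum_subset (range_subset_range.2 (by omega)) (fun s _ hs => ?_)).symm
  simp only [mem_range, not_lt] at hs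
  rw [Nat.choose_eq_zero_of_lt (show m < s by omega), zero_mul]

theorem key_identity_i_eq_k (n k : ℕ) (h : k ≤ n) :
    (n.choose k) ^ 2 * ((n + k).choose k) ^ 2 =
      ∑ j ∈ Finset.range (n + 1),
        (2 * k).choose k * k.choose (j - k) * j.choose k *
          n.choose j * (n + j).choose j := by
  symm
  calc ∑ j ∈ range (n+1),
        (2*k).choose k * k.choose (j-k) * j.choose k * n.choose j * (n+j).choose j
      = ∑ j ∈ range (n+k+1),
        (2*k).choose k * k.choose (j-k) * j.choose k * n.choose j * (n+j).choose j := by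
        refine Finset.sum_subset (range_subset_range.2 (by omega)) (fun j _ hj => ?_)
        simp only [mem_range, not_lt] at hj
        rw [Nat.choose_eq_zero_of_lt (show n < j by omega)]
        ring
    _ = ∑ j ∈ Ico k (2*k+1),
        (2*k).choose k * k.choose (j-k) * j.choose k * n.choose j * (n+j).choose j := by
        refine (Finset.sum_subset (fun x hx => ?_) (fun j hj hj2 => ?_)).symm
        · simp only [mem_Ico, mem_range] at hx ⊢; omega
        · simp only [mem_range] at hj
          simp only [mem_Ico, not_and, not_lt] at hj2
          rcases lt_or_ge j k with hlt | hge
          · rw [Nat.choose_eq_zero_of_lt hlt]; ring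
          · rw [Nat.choose_eq_zero_of_lt (show k < j - k by omega)]; ring
    _ = ∑ m ∈ range (k+1),
        (2*k).choose k * k.choose (k+m-k) * (k+m).choose k * n.choose (k+m)
          * (n+(k+m)).choose (k+m) := by
        rw [Finset.sum_Ico_eq_sum_range, show 2*k+1-k = k+1 by omega]
    _ = ∑ m ∈ range (k+1), ∑ s ∈ range (k+1),
        (2*k).choose k * (n.choose k * ((n-k).choose m
          * (k.choose m * (m.choose s * (n+k).choose (n-s))))) := by
        refine sum_congr rfl fun m hm => ?_
        simp only [mem_range] at hm
        have hmk : m ≤ k := by omega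
        have e1 : n.choose (k+m) * (k+m).choose k = n.choose k * (n-k).choose m := by
          have := tri (a := n) (b := k+m) (c := k) (Nat.le_add_right k m)
          rwa [Nat.add_sub_cancel_left] at this
        rw [Nat.add_sub_cancel_left, expandAux hmk h, Finset.mul_sum]
        refine sum_congr rfl fun s _ => ?_
        calc (2*k).choose k * k.choose m * (k+m).choose k * n.choose (k+m)
              * (m.choose s * (n+k).choose (n-s))
            = ((2*k).choose k * k.choose m * (m.choose s * (n+k).choose (n-s)))
              * (n.choose (k+m) * (k+m).choose k) := by ring
          _ = ((2*k).choose k * k.choose m * (m.choose s * (n+k).choose (n-s)))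
              * (n.choose k * (n-k).choose m) := by rw [e1]
          _ = (2*k).choose k * (n.choose k * ((n-k).choose m
              * (k.choose m * (m.choose s * (n+k).choose (n-s))))) := by ring
    _ = ∑ s ∈ range (k+1), ∑ m ∈ range (k+1),
        (2*k).choose k * (n.choose k * ((n-k).choose m
          * (k.choose m * (m.choose s * (n+k).choose (n-s))))) := Finset.sum_comm
    _ = ∑ s ∈ range (k+1),
        n.choose k * (n.choose k * ((n+k).choose k
          * ((2*k).choose (k-s) * (n-k).choose s))) := by
        refine sum_congr rfl fun s hs => ?_
        simp only [mem_range] at hs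
        have hsk : s ≤ k := by omega
        calc ∑ m ∈ range (k+1), (2*k).choose k * (n.choose k * ((n-k).choose m
              * (k.choose m * (m.choose s * (n+k).choose (n-s)))))
            = ∑ m ∈ range (k+1), ((2*k).choose k * (n.choose k * (n+k).choose (n-s)))
              * (k.choose m * ((n-k).choose m * m.choose s)) := by
              refine sum_congr rfl fun m _ => by ring
          _ = ((2*k).choose k * (n.choose k * (n+k).choose (n-s)))
              * (k.choose s * (n-s).choose k) := by
              rw [← Finset.mul_sum, innerSumAux hsk h]
          _ = n.choose k * ((2*k).choose k
              * (k.choose s * ((n-s).choose k * (n+k).choose (n-s)))) := by ring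
          _ = n.choose k * (n.choose k * ((n+k).choose k
              * ((2*k).choose (k-s) * (n-k).choose s))) := by rw [Tlem hsk h]
    _ = (n.choose k) ^ 2 * ((n+k).choose k) ^ 2 := by
        rw [← Finset.mul_sum, ← Finset.mul_sum, ← Finset.mul_sum]
        have hv : ∑ s ∈ range (k+1), (2*k).choose (k-s) * (n-k).choose s
            = (n+k).choose k := by
          have hv2 := vander (n-k) (2*k) k
          rw [show n-k+2*k = n+k by omega] at hv2
          calc ∑ s ∈ range (k+1), (2*k).choose (k-s) * (n-k).choose s
              = ∑ s ∈ range (k+1), (n-k).choose s * (2*k).choose (k-s) := by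
                exact sum_congr rfl fun s _ => mul_comm _ _
            _ = (n+k).choose k := hv2.symm
        rw [hv]; ring
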